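/- arXiv:1708.03440 — 2 statements merged into one kernel-verified Lean document; each statement's English description precedes it below -/
import Mathlib

section
/- Let m ≥ 1 and let λ_1,…,λ_m be complex numbers such that λ_1³,…,λ_m³ are nonzero and pairwise distinct, and set f(z) = ∏_{j=1}^m (1−λ_j³ z³) ∈ ℂ((z)). Then the ℂ-linear span of the family S₁ = {z^{3m−3i} : i ≥ 0} ∪ {z^{−1−3i} f(z) : i ≥ 0} ∪ {z^{−3m−2−3i} f(z)² : i ≥ 0} is a point of the Sato Grassmannian UGM. -/
set_option synthInstance.maxHeartbeats 1000000
set_option maxHeartbeats 1000000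

noncomputable section

/- Shortcut instances to speed up instance search for submodules of `ℂ((z))`. -/
instance (U : Submodule ℂ (LaurentSeries ℂ)) : AddCommGroup U := inferInstance
instance (U : Submodule ℂ (LaurentSeries ℂ)) : Module ℂ U := inferInstance

/-- The variable `z` in the field of formal Laurent series `ℂ((z))`. -/
def zL : LaurentSeries ℂ := HahnSeries.single 1 1

/-- Truncation: keep only the coefficients of nonpositive powers of `z`.
This is the projection onto `V_φ = ℂ[z⁻¹]` along `V₀ = zℂ[[z]]`. -/
def trunc : LaurentSeries ℂ →ₗ[ℂ] LaurentSeries ℂ where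
  toFun f :=
    { coeff := fun n => if n ≤ 0 then f.coeff n else 0
      isPWO_support' := f.isPWO_support.mono (by
        intro n hn
        simp only [Function.mem_support] at hn ⊢
        intro h
        apply hn
        simp [h]) }
  map_add' f g := by
    ext n
    by_cases h : n ≤ 0 <;> simp [HahnSeries.coeff_add, h]
  map_smul' c f := by
    ext n
    by_cases h : n ≤ 0 <;> simp [HahnSeries.coeff_smul, h]

/-- `V_φ = ℂ[z⁻¹]`, realized as the range of the truncation map. -/
def Vphi : Submodule ℂ (LaurentSeries ℂ) := LinearMap.range trunc

/-- The projection `π : ℂ((z)) → V_φ` restricted to a subspace `U`. -/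
def projU (U : Submodule ℂ (LaurentSeries ℂ)) : U →ₗ[ℂ] Vphi :=
  trunc.rangeRestrict.comp U.subtype

/-- The Sato Grassmannian: subspaces `U ⊆ ℂ((z))` such that the kernel and the
cokernel of `π|_U : U → V_φ` are finite dimensional of the same dimension. -/
def UGM : Set (Submodule ℂ (LaurentSeries ℂ)) :=
  {U | FiniteDimensional ℂ (LinearMap.ker (projU U)) ∧
       FiniteDimensional ℂ (Vphi ⧸ LinearMap.range (projU U)) ∧
       Module.finrank ℂ (LinearMap.ker (projU U)) =
         Module.finrank ℂ (Vphi ⧸ LinearMap.range (projU U))}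

/-- `f(z) = ∏_{j=1}^m (1 - λ_j³ z³)` in `ℂ((z))`. -/
def fSing (m : ℕ) (lam : Fin m → ℂ) : LaurentSeries ℂ :=
  ∏ j : Fin m, (1 - algebraMap ℂ (LaurentSeries ℂ) (lam j ^ 3) * zL ^ 3)

/-- The basis (9.4) of `ι(U_a(X^aff_sing))`:
`z^{3m-3i}`, `z^{-1-3i}f(z)`, `z^{-3m-2-3i}f(z)²` for `i ≥ 0`. -/
def S1 (m : ℕ) (lam : Fin m → ℂ) : Set (LaurentSeries ℂ) :=
  (Set.range fun i : ℕ => zL ^ (3 * (m : ℤ) - 3 * (i : ℤ))) ∪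
    (Set.range fun i : ℕ => zL ^ (-1 - 3 * (i : ℤ)) * fSing m lam) ∪
    (Set.range fun i : ℕ => zL ^ (-3 * (m : ℤ) - 2 - 3 * (i : ℤ)) * fSing m lam ^ 2)


/-!
Each member `z^a f^k` of `S₁` has order exactly `a`, since `f` is a power series with constant
term `1`; the orders `3m - 3i`, `-1 - 3i`, `-3m - 2 - 3i` lie in distinct residue classes mod 3 and
are pairwise distinct. For a family of pairwise distinct orders, a finite linear combination has
the leading term of its member of least order. Hence `U ∩ zℂ[[z]]` is spanned by the members of
positive order, `z^{3m}, …, z^3`, and the monomials `z^n`, `n ≤ 0`, whose exponent is not an order,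
namely `z^{-2}, z^{-5}, …, z^{1-3m}`, span a complement of `π(U)` in `ℂ[z⁻¹]`: both have
dimension `m`.
-/

open HahnSeries Set
open scoped LaurentSeries

lemma trunc_coeff_of_nonpos (f : ℂ⸨X⸩) {n : ℤ} (hn : n ≤ 0) : (trunc f).coeff n = f.coeff n :=
  if_pos hn

lemma trunc_coeff_of_pos (f : ℂ⸨X⸩) {n : ℤ} (hn : 0 < n) : (trunc f).coeff n = 0 :=
  if_neg hn.not_ge

lemma trunc_eq_zero_iff {f : ℂ⸨X⸩} : trunc f = 0 ↔ ∀ n ≤ 0, f.coeff n = 0 := by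
  refine ⟨fun h n hn => ?_, fun h => ?_⟩
  · rw [← trunc_coeff_of_nonpos f hn, h, coeff_zero]
  · ext n
    rcases le_or_gt n 0 with hn | hn
    · rw [trunc_coeff_of_nonpos f hn, h n hn, coeff_zero]
    · rw [trunc_coeff_of_pos f hn, coeff_zero]

lemma support_trunc_subset {f : ℂ⸨X⸩} {a : ℤ} (hf : ∀ n < a, f.coeff n = 0) :
    (trunc f).support ⊆ Icc a 0 := by
  intro n hn
  rw [mem_support] at hn
  rcases le_or_gt n 0 with h0 | h0
  · rw [trunc_coeff_of_nonpos f h0] at hn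
    exact ⟨not_lt.1 fun h => hn (hf n h), h0⟩
  · exact absurd (trunc_coeff_of_pos f h0) hn

lemma Vphi_le_of_forall_exists {P : Submodule ℂ ℂ⸨X⸩}
    (hP : ∀ n ≤ 0, ∃ h ∈ P, h.coeff n = 1 ∧ h.support ⊆ Icc n 0) : Vphi ≤ P := by
  -- Shrink the support window from the left by subtracting a multiple of the element of `P`
  -- whose lowest term sits at its left end.
  have key : ∀ N : ℕ, ∀ y : ℂ⸨X⸩, y.support ⊆ Ioc (-N : ℤ) 0 → y ∈ P := by
    intro N
    induction N with
    | zero =>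
      intro y hy
      simp only [CharP.cast_eq_zero, neg_zero, Ioc_self, subset_empty_iff,
        support_eq_empty_iff] at hy
      simp [hy]
    | succ N ih =>
      intro y hy
      obtain ⟨h, hP, h1, hsupp⟩ := hP (-N) (by omega)
      have hy' : (y - y.coeff (-N) • h).support ⊆ Ioc (-N : ℤ) 0 := by
        intro n hn
        rw [mem_support, coeff_sub, coeff_smul, smul_eq_mul] at hn
        have hne : n ≠ -N := by rintro rfl; simp [h1] at hn
        have hmem : n ∈ Icc (-N : ℤ) 0 := by
          by_cases hyn : y.coeff n = 0
          · exact hsupp (mem_support _ _ |>.2 fun hh => hn (by simp [hyn, hh]))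
          · have := hy ((mem_support _ _).2 hyn)
            push_cast at this
            exact ⟨by linarith [this.1], this.2⟩
        exact ⟨lt_of_le_of_ne hmem.1 hne.symm, hmem.2⟩
      simpa using P.add_mem (ih _ hy') (P.smul_mem (y.coeff (-N)) hP)
  rintro _ ⟨w, rfl⟩
  refine key ((-w.order).toNat + 1) _ ((support_trunc_subset fun n hn =>
    coeff_eq_zero_of_lt_order hn).trans fun n hn => ⟨?_, hn.2⟩)
  have := hn.1
  push_cast
  omega

lemma mem_Vphi_of_coeff_eq_zero {f : ℂ⸨X⸩} (hf : ∀ n, 0 < n → f.coeff n = 0) : f ∈ Vphi := by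
  refine ⟨f, HahnSeries.ext (funext fun n => ?_)⟩
  rcases le_or_gt n 0 with hn | hn
  · exact trunc_coeff_of_nonpos f hn
  · rw [trunc_coeff_of_pos f hn, hf n hn]

lemma Submodule.isCompl_comap_subtype_of_sup_eq {R M : Type*} [Ring R] [AddCommGroup M]
    [Module R M] {p q r : Submodule R M} (hqr : Disjoint q r) (h : q ⊔ r = p) :
    IsCompl (q.comap p.subtype) (r.comap p.subtype) := by
  refine ⟨Submodule.disjoint_def.2 fun x hxq hxr => Subtype.ext
    (Submodule.disjoint_def.1 hqr _ hxq hxr),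
    codisjoint_iff.2 (Submodule.eq_top_iff'.2 fun x => ?_)⟩
  obtain ⟨y, hy, z, hz, hyz⟩ := Submodule.mem_sup.1 (h ▸ x.2 : (x : M) ∈ q ⊔ r)
  exact Submodule.mem_sup.2
    ⟨⟨y, h ▸ Submodule.mem_sup_left hy⟩, hy, ⟨z, h ▸ Submodule.mem_sup_right hz⟩, hz,
      Subtype.ext hyz⟩

lemma ker_projU (U : Submodule ℂ ℂ⸨X⸩) :
    LinearMap.ker (projU U) = (U ⊓ LinearMap.ker trunc).comap U.subtype := by
  ext x
  exact ⟨fun h => ⟨x.2, congrArg Subtype.val h⟩, fun h => Subtype.ext h.2⟩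

lemma range_projU (U : Submodule ℂ ℂ⸨X⸩) :
    LinearMap.range (projU U) = (U.map trunc).comap Vphi.subtype := by
  ext x
  exact ⟨fun ⟨y, hy⟩ => ⟨y, y.2, congrArg Subtype.val hy⟩,
    fun ⟨y, hy, hyx⟩ => ⟨⟨y, hy⟩, Subtype.ext hyx⟩⟩

theorem mem_UGM_of_disjoint_of_sup_eq {U W : Submodule ℂ ℂ⸨X⸩}
    (hdisj : Disjoint (U.map trunc) W) (hsup : U.map trunc ⊔ W = Vphi)
    [FiniteDimensional ℂ ↥(U ⊓ LinearMap.ker trunc)] [FiniteDimensional ℂ W]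
    (hrank : Module.finrank ℂ ↥(U ⊓ LinearMap.ker trunc) = Module.finrank ℂ W) : U ∈ UGM := by
  let eKer : LinearMap.ker (projU U) ≃ₗ[ℂ] ↥(U ⊓ LinearMap.ker trunc) :=
    (LinearEquiv.ofEq _ _ (ker_projU U)).trans
      (Submodule.comapSubtypeEquivOfLe inf_le_left)
  let eCoker : (Vphi ⧸ LinearMap.range (projU U)) ≃ₗ[ℂ] ↥W :=
    (Submodule.quotientEquivOfIsCompl _ _ (range_projU U ▸
      Submodule.isCompl_comap_subtype_of_sup_eq hdisj hsup)).trans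
      (Submodule.comapSubtypeEquivOfLe (hsup ▸ le_sup_right))
  exact ⟨eKer.symm.finiteDimensional, eCoker.symm.finiteDimensional,
    by rw [eKer.finrank_eq, eCoker.finrank_eq, hrank]⟩

section DistinctOrders

variable {ι : Type*} {g : ι → ℂ⸨X⸩} {o : ι → ℤ}

lemma coeff_linearCombination_of_forall_le (hg : ∀ i, (g i).orderTop = o i)
    (ho : Function.Injective o) (c : ι →₀ ℂ) {i : ι} (hi : ∀ j ∈ c.support, o i ≤ o j) :
    (Finsupp.linearCombination ℂ g c).coeff (o i) = c i * (g i).coeff (o i) := by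
  rw [Finsupp.linearCombination_apply, Finsupp.sum, coeff_sum, Finset.sum_eq_single i]
  · simp
  · intro j hj hji
    have hlt : (o i : WithTop ℤ) < (g j).orderTop := by
      rw [hg j]
      exact_mod_cast lt_of_le_of_ne (hi j hj) fun h => hji (ho h).symm
    simp [coeff_eq_zero_of_lt_orderTop hlt]
  · simp +contextual

lemma exists_coeff_linearCombination_ne_zero (hg : ∀ i, (g i).orderTop = o i)
    (ho : Function.Injective o) {c : ι →₀ ℂ} {j : ι} (hj : j ∈ c.support) :
    ∃ i, o i ≤ o j ∧ (Finsupp.linearCombination ℂ g c).coeff (o i) ≠ 0 := by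
  obtain ⟨i, hi, hmin⟩ := c.support.exists_min_image o ⟨j, hj⟩
  refine ⟨i, hmin j hj, ?_⟩
  rw [coeff_linearCombination_of_forall_le hg ho c hmin]
  exact mul_ne_zero (Finsupp.mem_support_iff.1 hi) (coeff_orderTop_ne (hg i))

lemma linearIndependent_of_orderTop (hg : ∀ i, (g i).orderTop = o i)
    (ho : Function.Injective o) : LinearIndependent ℂ g := by
  rw [linearIndependent_iff]
  intro c hc
  by_contra hne
  obtain ⟨j, hj⟩ := Finsupp.support_nonempty_iff.2 hne
  obtain ⟨i, -, hi⟩ := exists_coeff_linearCombination_ne_zero hg ho hj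
  exact hi (by rw [hc, coeff_zero])

lemma mem_span_image_of_coeff_eq_zero (hg : ∀ i, (g i).orderTop = o i)
    (ho : Function.Injective o) {x : ℂ⸨X⸩} (hx : x ∈ Submodule.span ℂ (range g))
    (h : ∀ i, o i ≤ 0 → x.coeff (o i) = 0) :
    x ∈ Submodule.span ℂ (g '' {i | 0 < o i}) := by
  rw [← Finsupp.range_linearCombination] at hx
  obtain ⟨c, rfl⟩ := hx
  refine (Finsupp.mem_span_image_iff_linearCombination ℂ).2 ⟨c, fun j hj => ?_, rfl⟩
  by_contra hj'
  obtain ⟨i, hij, hi⟩ := exists_coeff_linearCombination_ne_zero hg ho hj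
  exact hi (h i (hij.trans (not_lt.1 hj')))

lemma span_inf_ker_trunc (hg : ∀ i, (g i).orderTop = o i) (ho : Function.Injective o) :
    Submodule.span ℂ (range g) ⊓ LinearMap.ker trunc =
      Submodule.span ℂ (g '' {i | 0 < o i}) := by
  apply le_antisymm
  · rintro x ⟨hx, hker⟩
    refine mem_span_image_of_coeff_eq_zero hg ho hx fun i hi => ?_
    rw [← trunc_coeff_of_nonpos x hi]
    exact (LinearMap.mem_ker.1 hker).symm ▸ coeff_zero
  · rw [Submodule.span_le]
    rintro _ ⟨i, hi, rfl⟩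
    refine ⟨Submodule.subset_span ⟨i, rfl⟩, trunc_eq_zero_iff.2 fun n hn => ?_⟩
    apply coeff_eq_zero_of_lt_orderTop
    rw [hg i]
    exact_mod_cast hn.trans_lt hi

lemma coeff_eq_zero_of_mem_span_single {t : Set ℤ} {w : ℂ⸨X⸩}
    (hw : w ∈ Submodule.span ℂ ((fun n => single n (1 : ℂ)) '' t)) {n : ℤ} (hn : n ∉ t) :
    w.coeff n = 0 := by
  refine (Submodule.span_le (p := LinearMap.ker (coeff.linearMap (R := ℂ) n))).2 ?_ hw
  rintro _ ⟨k, hk, rfl⟩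
  simp [show n ≠ k by rintro rfl; exact hn hk]

def orderGaps (o : ι → ℤ) : Set ℤ := {n | n ≤ 0 ∧ n ∉ range o}

lemma disjoint_map_trunc_span_single_orderGaps (hg : ∀ i, (g i).orderTop = o i)
    (ho : Function.Injective o) :
    Disjoint (Submodule.map trunc (Submodule.span ℂ (range g)))
      (Submodule.span ℂ ((fun n => single n (1 : ℂ)) '' orderGaps o)) := by
  rw [Submodule.disjoint_def]
  rintro _ ⟨x, hx, rfl⟩ hw
  have hpos := mem_span_image_of_coeff_eq_zero hg ho hx fun i hi => by
    rw [← trunc_coeff_of_nonpos x hi]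
    exact coeff_eq_zero_of_mem_span_single hw fun h => h.2 ⟨i, rfl⟩
  rw [← span_inf_ker_trunc hg ho] at hpos
  exact hpos.2

lemma Vphi_le_map_trunc_sup_span_single_orderGaps (hg : ∀ i, (g i).orderTop = o i) :
    Vphi ≤ Submodule.map trunc (Submodule.span ℂ (range g)) ⊔
      Submodule.span ℂ ((fun n => single n (1 : ℂ)) '' orderGaps o) := by
  refine Vphi_le_of_forall_exists fun n hn => ?_
  by_cases hno : n ∈ range o
  · obtain ⟨i, rfl⟩ := hno
    have hlead := coeff_orderTop_ne (hg i)
    refine ⟨((g i).coeff (o i))⁻¹ • trunc (g i), Submodule.mem_sup_left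
      (Submodule.smul_mem _ _ (Submodule.mem_map_of_mem (Submodule.subset_span ⟨i, rfl⟩))),
      ?_, ?_⟩
    · rw [coeff_smul, trunc_coeff_of_nonpos _ hn, smul_eq_mul, inv_mul_cancel₀ hlead]
    · refine (support_smul_subset _ _).trans (support_trunc_subset fun k hk => ?_)
      apply coeff_eq_zero_of_lt_orderTop
      rw [hg i]
      exact_mod_cast hk
  · refine ⟨single n 1, Submodule.mem_sup_right (Submodule.subset_span ⟨n, ⟨hn, hno⟩, rfl⟩),
      coeff_single_same _ _, ?_⟩
    exact support_single_subset.trans (singleton_subset_iff.2 ⟨le_rfl, hn⟩)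

lemma span_single_orderGaps_le_Vphi (o : ι → ℤ) :
    Submodule.span ℂ ((fun n => single n (1 : ℂ)) '' orderGaps o) ≤ Vphi := by
  rw [Submodule.span_le]
  rintro _ ⟨n, hn, rfl⟩
  exact mem_Vphi_of_coeff_eq_zero fun k hk => coeff_single_of_ne (by linarith [hn.1])

lemma finrank_span_image_of_orderTop (hg : ∀ i, (g i).orderTop = o i)
    (ho : Function.Injective o) (s : Finset ι) :
    Module.finrank ℂ (Submodule.span ℂ (g '' s)) = s.card := by
  rw [image_eq_range]
  exact (finrank_span_eq_card ((linearIndependent_of_orderTop hg ho).comp _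
    Subtype.val_injective)).trans (Fintype.card_coe s)

theorem span_mem_UGM_of_orderTop (hg : ∀ i, (g i).orderTop = o i) (ho : Function.Injective o)
    (s : Finset ι) (hs : {i | 0 < o i} = ↑s) (t : Finset ℤ) (ht : orderGaps o = ↑t)
    (hcard : s.card = t.card) : Submodule.span ℂ (range g) ∈ UGM := by
  have hker := span_inf_ker_trunc hg ho
  rw [hs] at hker
  have hdisj := disjoint_map_trunc_span_single_orderGaps hg ho
  have hle := Vphi_le_map_trunc_sup_span_single_orderGaps hg
  have hW := span_single_orderGaps_le_Vphi o
  rw [ht] at hdisj hle hW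
  have : FiniteDimensional ℂ ↥(Submodule.span ℂ (range g) ⊓ LinearMap.ker trunc) :=
    hker ▸ FiniteDimensional.span_of_finite ℂ (s.finite_toSet.image g)
  have := FiniteDimensional.span_of_finite ℂ (t.finite_toSet.image fun n => single n (1 : ℂ))
  refine mem_UGM_of_disjoint_of_sup_eq hdisj
    (le_antisymm (sup_le LinearMap.map_le_range hW) hle) ?_
  have hmono : ∀ n : ℤ, (single n (1 : ℂ)).orderTop = id n := fun n => orderTop_single one_ne_zero
  rw [hker, finrank_span_image_of_orderTop hg ho,
    finrank_span_image_of_orderTop hmono Function.injective_id, hcard]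

end DistinctOrders

lemma zL_zpow (n : ℤ) : zL ^ n = single n (1 : ℂ) :=
  (RatFunc.single_zpow n).symm

lemma orderTop_zL_zpow (n : ℤ) : (zL ^ n).orderTop = n := by
  rw [zL_zpow, orderTop_single one_ne_zero]

lemma orderTop_one_sub_smul_zL_pow_three (c : ℂ) : (1 - c • zL ^ 3).orderTop = 0 := by
  have h3 : (0 : WithTop ℤ) < (zL ^ 3).orderTop := by
    rw [← zpow_natCast, orderTop_zL_zpow]
    norm_num
  rw [orderTop_sub (orderTop_one.trans_lt (h3.trans_le (orderTop_le_orderTop_smul c _))),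
    orderTop_one]

lemma orderTop_fSing (m : ℕ) (lam : Fin m → ℂ) : (fSing m lam).orderTop = 0 :=
  Finset.prod_induction _ (fun x : ℂ⸨X⸩ => x.orderTop = 0) (fun a b ha hb => by simp [ha, hb])
    orderTop_one fun j _ => by
      rw [LaurentSeries.algebraMap_apply, C_mul_eq_smul]
      exact orderTop_one_sub_smul_zL_pow_three _

def s1Family (m : ℕ) (lam : Fin m → ℂ) : (ℕ ⊕ ℕ) ⊕ ℕ → ℂ⸨X⸩ :=
  Sum.elim
    (Sum.elim (fun i => zL ^ (3 * (m : ℤ) - 3 * (i : ℤ)))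
      (fun i => zL ^ (-1 - 3 * (i : ℤ)) * fSing m lam))
    (fun i => zL ^ (-3 * (m : ℤ) - 2 - 3 * (i : ℤ)) * fSing m lam ^ 2)

def s1Order (m : ℕ) : (ℕ ⊕ ℕ) ⊕ ℕ → ℤ :=
  Sum.elim (Sum.elim (fun i => 3 * (m : ℤ) - 3 * (i : ℤ)) (fun i => -1 - 3 * (i : ℤ)))
    (fun i => -3 * (m : ℤ) - 2 - 3 * (i : ℤ))

lemma range_s1Family (m : ℕ) (lam : Fin m → ℂ) : range (s1Family m lam) = S1 m lam := by
  rw [s1Family, Sum.elim_range, Sum.elim_range]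
  rfl

lemma orderTop_s1Family (m : ℕ) (lam : Fin m → ℂ) (i : (ℕ ⊕ ℕ) ⊕ ℕ) :
    (s1Family m lam i).orderTop = s1Order m i := by
  rcases i with (i | i) | i <;>
    simp [s1Family, s1Order, orderTop_zL_zpow, orderTop_fSing, pow_two]

lemma s1Order_injective (m : ℕ) : Function.Injective (s1Order m) := by
  rintro ((i | i) | i) ((j | j) | j) h <;> simp [s1Order] at h ⊢ <;> omega

lemma setOf_s1Order_pos (m : ℕ) :
    {i | 0 < s1Order m i} =
      ((Finset.range m).map (.trans .inl .inl) : Finset ((ℕ ⊕ ℕ) ⊕ ℕ)) := by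
  ext ((i | i) | i) <;> simp [s1Order] <;> omega

lemma orderGaps_s1Order (m : ℕ) :
    orderGaps (s1Order m) =
      ↑((Finset.range m).image fun k : ℕ => -(3 * (k : ℤ) + 2)) := by
  ext n
  simp only [orderGaps, s1Order, mem_ofPred_eq, mem_range, Sum.exists, Sum.elim_inl,
    Sum.elim_inr, not_or, not_exists, Finset.coe_image, Finset.coe_range,
    mem_image, mem_Iio]
  constructor
  · rintro ⟨hn, ⟨h0, h2⟩, h1⟩
    -- the only candidate index in each of the three families
    have := h0 (m + (-n / 3).toNat)
    have := h2 ((-1 - n) / 3).toNat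
    have := h1 ((-3 * m - 2 - n) / 3).toNat
    exact ⟨((-n - 2) / 3).toNat, by omega, by omega⟩
  · rintro ⟨k, hk, rfl⟩
    exact ⟨by omega, ⟨fun _ => by omega, fun _ => by omega⟩, fun _ => by omega⟩

theorem singular_trigonal_affine_ring_mem_UGM_general (m : ℕ)
    (lam : Fin m → ℂ) :
    Submodule.span ℂ (S1 m lam) ∈ UGM := by
  rw [← range_s1Family]
  exact span_mem_UGM_of_orderTop (orderTop_s1Family m lam) (s1Order_injective m) _
    (setOf_s1Order_pos m) _ (orderGaps_s1Order m)
    (by rw [Finset.card_map, Finset.card_image_of_injective _ fun a b h => by simpa using h])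

/-- the span of the basis (9.4) — the image
`ι(U_a(X^aff_sing))` of the affine ring of the singular rational curve
`y³ = x ∏_{j=1}^m (x-λ_j³)³` — is a point of the Sato Grassmannian. -/
theorem singular_trigonal_affine_ring_mem_UGM (m : ℕ) (hm : 1 ≤ m)
    (lam : Fin m → ℂ) (hne : ∀ j, lam j ^ 3 ≠ 0)
    (hinj : Function.Injective fun j => lam j ^ 3) :
    Submodule.span ℂ (S1 m lam) ∈ UGM :=
  singular_trigonal_affine_ring_mem_UGM_general m lam
end
end

section
/- Let U be a point of the Sato Grassmannian UGM and let g ∈ ℂ[[z]] ⊂ ℂ((z)) be a formal power series with nonzero constant term. Then the subspace gU = {g·u : u ∈ U} of ℂ((z)) is again a point of UGM. -/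
set_option synthInstance.maxHeartbeats 1000000
set_option maxHeartbeats 1000000

noncomputable section

instance : SMulCommClass ℂ (LaurentSeries ℂ) (LaurentSeries ℂ) := by
  constructor
  intro c a b
  show c • (a * b) = a * (c • b)
  rw [← HahnSeries.single_zero_mul_eq_smul, ← HahnSeries.single_zero_mul_eq_smul]
  ring

/-! Multiplication by `g` maps `U` isomorphically onto `gU`, and since `g` has no negative powers
of `z`, `π(g f) = π(g π f)`. Hence `π|_{gU}` is conjugate to `π|_U` by the Toeplitz operator
`T_g v = π(g v)` on `V_φ`. Toeplitz operators with power-series symbols are multiplicative,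
`T_g T_h = T_{gh}`, so `T_g` is invertible with inverse `T_{g⁻¹}`; conjugate maps have isomorphic
kernels and cokernels. -/

section ConjugateMaps

variable {R M N M' N' : Type*} [Ring R] [AddCommGroup M] [AddCommGroup N] [AddCommGroup M']
  [AddCommGroup N'] [Module R M] [Module R N] [Module R M'] [Module R N']
  {f : M →ₗ[R] N} {f' : M' →ₗ[R] N'}

lemma LinearMap.map_ker_of_comp_eq (eM : M ≃ₗ[R] M') (eN : N ≃ₗ[R] N')
    (h : f' ∘ₗ eM.toLinearMap = eN.toLinearMap ∘ₗ f) :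
    (LinearMap.ker f).map (eM : M →ₗ[R] M') = LinearMap.ker f' := by
  rw [Submodule.map_equiv_eq_comap_symm, ← LinearMap.ker_comp, ← LinearEquiv.ker_comp eN,
    ← LinearMap.comp_assoc, ← h, LinearMap.comp_assoc, eM.comp_symm, LinearMap.comp_id]

lemma LinearMap.map_range_of_comp_eq (eM : M ≃ₗ[R] M') (eN : N ≃ₗ[R] N')
    (h : f' ∘ₗ eM.toLinearMap = eN.toLinearMap ∘ₗ f) :
    (LinearMap.range f).map (eN : N →ₗ[R] N') = LinearMap.range f' := by
  rw [← LinearMap.range_comp, ← h, LinearEquiv.range_comp]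

end ConjugateMaps

lemma mem_UGM_of_projU_comp_eq {U U' : Submodule ℂ (LaurentSeries ℂ)} (e : U ≃ₗ[ℂ] U')
    (T : Vphi ≃ₗ[ℂ] Vphi) (h : projU U' ∘ₗ e.toLinearMap = T.toLinearMap ∘ₗ projU U)
    (hU : U ∈ UGM) : U' ∈ UGM := by
  obtain ⟨hker, hcoker, hrank⟩ := hU
  let eker := e.ofSubmodules _ _ (LinearMap.map_ker_of_comp_eq e T h)
  let ecoker := Submodule.Quotient.equiv _ _ T (LinearMap.map_range_of_comp_eq e T h)
  exact ⟨eker.finiteDimensional, ecoker.finiteDimensional,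
    by rw [← eker.finrank_eq, ← ecoker.finrank_eq, hrank]⟩

lemma trunc_coeff (f : LaurentSeries ℂ) (n : ℤ) :
    (trunc f).coeff n = if n ≤ 0 then f.coeff n else 0 := rfl

lemma trunc_trunc (f : LaurentSeries ℂ) : trunc (trunc f) = trunc f := by
  ext n
  by_cases hn : n ≤ 0 <;> simp [trunc_coeff, hn]

lemma trunc_eq_zero_iff_s13 {f : LaurentSeries ℂ} : trunc f = 0 ↔ 1 ≤ f.orderTop := by
  rw [HahnSeries.le_orderTop_iff_forall, HahnSeries.ext_iff, funext_iff]
  refine forall_congr' fun n => ?_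
  simp only [trunc_coeff, HahnSeries.coeff_zero, ite_eq_right_iff]
  norm_cast
  rw [← Int.lt_add_one_iff, zero_add]

lemma zero_le_orderTop_ofPowerSeries {R : Type*} [Semiring R] (g : PowerSeries R) :
    0 ≤ (HahnSeries.ofPowerSeries ℤ R g).orderTop :=
  HahnSeries.le_orderTop_iff_forall.2 fun j hj => by
    rw [PowerSeries.coeff_coe, if_pos (by exact_mod_cast hj)]

-- `g (f - π f)` lies in `V₀`, because `f - π f` does and `g` has no negative powers of `z`.
lemma trunc_mul_trunc (g : PowerSeries ℂ) (f : LaurentSeries ℂ) :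
    trunc (HahnSeries.ofPowerSeries ℤ ℂ g * trunc f) =
      trunc (HahnSeries.ofPowerSeries ℤ ℂ g * f) := by
  have hdiff : 1 ≤ (f - trunc f).orderTop := by
    rw [← trunc_eq_zero_iff_s13, map_sub, trunc_trunc, sub_self]
  have hmul : trunc (HahnSeries.ofPowerSeries ℤ ℂ g * (f - trunc f)) = 0 := by
    refine trunc_eq_zero_iff_s13.2 (le_trans ?_ HahnSeries.orderTop_add_le_mul)
    simpa using add_le_add (zero_le_orderTop_ofPowerSeries g) hdiff
  rw [mul_sub, map_sub, sub_eq_zero] at hmul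
  exact hmul.symm

def toeplitz (g : PowerSeries ℂ) : Vphi →ₗ[ℂ] Vphi :=
  trunc.rangeRestrict ∘ₗ LinearMap.mulLeft ℂ (HahnSeries.ofPowerSeries ℤ ℂ g) ∘ₗ Vphi.subtype

lemma coe_toeplitz_apply (g : PowerSeries ℂ) (v : Vphi) :
    (toeplitz g v : LaurentSeries ℂ) = trunc (HahnSeries.ofPowerSeries ℤ ℂ g * v) := rfl

lemma toeplitz_mul (g h : PowerSeries ℂ) : toeplitz (g * h) = toeplitz g ∘ₗ toeplitz h := by
  ext v : 1
  apply Subtype.ext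
  rw [LinearMap.comp_apply, coe_toeplitz_apply, coe_toeplitz_apply, coe_toeplitz_apply,
    trunc_mul_trunc, map_mul (HahnSeries.ofPowerSeries ℤ ℂ), mul_assoc]

lemma toeplitz_one : toeplitz 1 = LinearMap.id := by
  ext ⟨_, f, rfl⟩ : 1
  apply Subtype.ext
  rw [coe_toeplitz_apply, map_one, one_mul, trunc_trunc, LinearMap.id_apply]

def toeplitzEquiv (g : PowerSeries ℂ) (hg : PowerSeries.constantCoeff g ≠ 0) :
    Vphi ≃ₗ[ℂ] Vphi :=
  LinearEquiv.ofLinearMap (f := toeplitz g) (g := toeplitz g⁻¹)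
    (by rw [← toeplitz_mul, PowerSeries.mul_inv_cancel g hg, toeplitz_one])
    (by rw [← toeplitz_mul, PowerSeries.inv_mul_cancel g hg, toeplitz_one])

lemma projU_map_mulLeft_comp (g : PowerSeries ℂ) (U : Submodule ℂ (LaurentSeries ℂ))
    (hg : Function.Injective (LinearMap.mulLeft ℂ (HahnSeries.ofPowerSeries ℤ ℂ g))) :
    projU (U.map (LinearMap.mulLeft ℂ (HahnSeries.ofPowerSeries ℤ ℂ g))) ∘ₗ
        (U.equivMapOfInjective _ hg).toLinearMap = toeplitz g ∘ₗ projU U := by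
  ext u : 1
  apply Subtype.ext
  exact (trunc_mul_trunc g u).symm

/-- gauge transformations preserve UGM: if `U ∈ UGM` and
`g ∈ ℂ[[z]]` has nonzero constant term, then `gU = {g·u : u ∈ U} ∈ UGM`. -/
theorem gauge_transform_mem_UGM (U : Submodule ℂ (LaurentSeries ℂ)) (hU : U ∈ UGM)
    (g : PowerSeries ℂ) (hg : PowerSeries.constantCoeff g ≠ 0) :
    Submodule.map (LinearMap.mulLeft ℂ (HahnSeries.ofPowerSeries ℤ ℂ g)) U ∈ UGM := by
  have hG : HahnSeries.ofPowerSeries ℤ ℂ g ≠ 0 :=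
    (map_ne_zero_iff _ HahnSeries.ofPowerSeries_injective).2 fun h => hg (by rw [h, map_zero])
  exact mem_UGM_of_projU_comp_eq _ (toeplitzEquiv g hg)
    (projU_map_mulLeft_comp g U (mul_right_injective₀ hG)) hU

end
end
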